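/- arXiv:1312.2480 — 2 statements merged into one kernel-verified Lean document; each statement's English description precedes it below -/
import Mathlib

section
/- Let f : A → B be a surjective ring homomorphism between finite (not necessarily commutative) rings, let x ∈ A be an idempotent and y ∈ B an idempotent with f(x) = y. If y = y₁ + y₂ where y₁, y₂ are orthogonal idempotents in B (i.e. y₁y₂ = y₂y₁ = 0), then there exist orthogonal idempotents x₁, x₂ ∈ A with x = x₁ + x₂, f(x₁) = y₁ and f(x₂) = y₂. -/
lemma exists_pow_idem {M : Type*} [Monoid M] [Finite M] (a : M) :
    ∃ n ≥ 1, IsIdempotentElem (a ^ n) := by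
  obtain ⟨i, j, hij, h⟩ := Finite.exists_ne_map_eq_of_infinite (fun n : ℕ => a ^ (n + 1))
  wlog hlt : i < j generalizing i j
  · exact this j i hij.symm h.symm (by omega)
  set m := i + 1 with hm
  set p := j - i with hp
  have hp1 : 1 ≤ p := by omega
  have base : a ^ m = a ^ (m + p) := by
    rw [show m + p = j + 1 by omega]; exact h
  have step : ∀ t ≥ m, a ^ t = a ^ (t + p) := by
    intro t ht
    obtain ⟨k, rfl⟩ := Nat.exists_eq_add_of_le ht
    induction k with
    | zero => simpa using base
    | succ k ih =>
        have ih' := ih (by omega)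
        rw [show m + (k+1) = (m+k) + 1 by ring, pow_succ, ih', ← pow_succ,
          show m+k+p+1 = m+(k+1)+p by ring]
        congr 1
  have multi : ∀ k, ∀ t ≥ m, a ^ t = a ^ (t + k * p) := by
    intro k
    induction k with
    | zero => simp
    | succ k ih =>
        intro t ht
        rw [ih t ht, show t + (k+1)*p = (t + k*p) + p by ring]
        exact step _ (by omega)
  refine ⟨m * p, Nat.mul_pos (by omega) hp1, ?_⟩
  unfold IsIdempotentElem
  rw [← pow_add]
  exact (multi m (m*p) (Nat.le_mul_of_pos_right m hp1)).symm

theorem stmt_0 {A B : Type*} [Ring A] [Fintype A] [Ring B] [Fintype B]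
    (f : A →+* B) (hf : Function.Surjective f)
    (x : A) (hx : IsIdempotentElem x)
    (y y₁ y₂ : B) (hy : IsIdempotentElem y) (hfx : f x = y)
    (hy₁ : IsIdempotentElem y₁) (hy₂ : IsIdempotentElem y₂)
    (horth : y₁ * y₂ = 0 ∧ y₂ * y₁ = 0) (hsum : y = y₁ + y₂) :
    ∃ x₁ x₂ : A, IsIdempotentElem x₁ ∧ IsIdempotentElem x₂ ∧
      x₁ * x₂ = 0 ∧ x₂ * x₁ = 0 ∧ x = x₁ + x₂ ∧ f x₁ = y₁ ∧ f x₂ = y₂ := by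
  obtain ⟨a₀, ha₀⟩ := hf y₁
  set a := x * a₀ * x with ha
  have hyy₁ : y * y₁ = y₁ := by
    rw [hsum, add_mul, hy₁, horth.2, add_zero]
  have hy₁y : y₁ * y = y₁ := by
    rw [hsum, mul_add, hy₁, horth.1, add_zero]
  have hfa : f a = y₁ := by
    simp [ha, ha₀, hfx, hyy₁, hy₁y]
  have hxa : x * a = a := by rw [ha, ← mul_assoc, ← mul_assoc, hx]
  have hax : a * x = a := by rw [ha, mul_assoc, mul_assoc, hx, ← mul_assoc]
  obtain ⟨n, hn1, hidem⟩ := exists_pow_idem a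
  obtain ⟨k, rfl⟩ := Nat.exists_eq_add_of_le hn1
  set x₁ := a ^ (1 + k) with hx₁
  have hxx₁ : x * x₁ = x₁ := by
    rw [hx₁, show 1 + k = k + 1 by omega, pow_succ', ← mul_assoc, hxa]
  have hx₁x : x₁ * x = x₁ := by
    rw [hx₁, show 1 + k = k + 1 by omega, pow_succ, mul_assoc, hax]
  have hfx₁ : f x₁ = y₁ := by
    rw [hx₁, map_pow, hfa, show 1 + k = k + 1 by omega]
    exact hy₁.pow_succ_eq k
  refine ⟨x₁, x - x₁, hidem, ?_, ?_, ?_, by abel, hfx₁, ?_⟩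
  · unfold IsIdempotentElem
    rw [mul_sub, sub_mul, sub_mul, hx, hxx₁, hx₁x, hidem]
    abel
  · rw [mul_sub, hx₁x, hidem, sub_self]
  · rw [sub_mul, hxx₁, hidem, sub_self]
  · rw [map_sub, hfx₁, hfx, hsum, add_sub_cancel_left]
end

section
/- Let R be a ring, M and N two R-modules, and p a prime with multiplication by p acting on Hom-sets. Suppose α : M → N and β : N → M are module homomorphisms such that β∘α ≡ id_M (mod p) and α∘β ≡ id_N (mod p), where congruence mod p means the difference lies in p·Hom. Then for every l ≥ 1, the maps α and β∘(α∘β)^{p^{l-1}−1} are mutually inverse isomorphisms modulo p^l, i.e. their composites differ from the identities by elements of p^l·Hom. -/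
lemma key_pow {A : Type*} [Ring A] (p l : ℕ) (hl : 1 ≤ l) (u : A) :
    ∃ c : A, (1 + (p : A) * u) ^ (p ^ (l - 1)) = 1 + (p : A) ^ l * c := by
  have h := dvd_sub_pow_of_dvd_sub (R := Polynomial ℤ) (p := p)
    (a := 1 + (p : Polynomial ℤ) * Polynomial.X) (b := 1)
    ⟨Polynomial.X, by ring⟩ (l - 1)
  rw [Nat.sub_add_cancel hl] at h
  obtain ⟨q, hq⟩ := h
  refine ⟨Polynomial.aeval u q, ?_⟩
  have h2 := congrArg (Polynomial.aeval u) hq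
  simp only [map_sub, map_add, map_pow, map_mul, map_one, map_natCast,
    Polynomial.aeval_X, Polynomial.aeval_one] at h2
  have : (1 + (p : A) * u) ^ (p ^ (l - 1)) - 1 = (p : A) ^ l * Polynomial.aeval u q := by
    simpa using h2
  exact sub_eq_iff_eq_add'.mp this

lemma comp_pow_aux {R M N : Type*} [Ring R] [AddCommGroup M] [Module R M]
    [AddCommGroup N] [Module R N] (α : M →ₗ[R] N) (β : N →ₗ[R] M) (k : ℕ) :
    β.comp ((α.comp β) ^ k) = ((β.comp α) ^ k).comp β := by
  induction k with
  | zero => simp [Module.End.one_eq_id]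
  | succ k ih =>
    rw [pow_succ, pow_succ, Module.End.mul_eq_comp, Module.End.mul_eq_comp,
      ← LinearMap.comp_assoc, ih]
    ext x; simp

theorem stmt_6 {R M N : Type*} [Ring R]
    [AddCommGroup M] [Module R M] [AddCommGroup N] [Module R N]
    (p : ℕ) (hp : p.Prime)
    (α : M →ₗ[R] N) (β : N →ₗ[R] M)
    (u : Module.End R M) (v : Module.End R N)
    (hβα : β.comp α = LinearMap.id + p • u)
    (hαβ : α.comp β = LinearMap.id + p • v)
    (l : ℕ) (hl : 1 ≤ l) :
    ∃ (u' : Module.End R M) (v' : Module.End R N),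
      (β.comp ((α.comp β) ^ (p ^ (l - 1) - 1))).comp α
        = LinearMap.id + p ^ l • u' ∧
      α.comp (β.comp ((α.comp β) ^ (p ^ (l - 1) - 1)))
        = LinearMap.id + p ^ l • v' := by
  have hppos : 1 ≤ p ^ (l - 1) := Nat.one_le_pow _ _ hp.pos
  have hk : p ^ (l - 1) - 1 + 1 = p ^ (l - 1) := Nat.sub_add_cancel hppos
  -- M side: β ∘ (αβ)^k ∘ α = (βα)^(k+1)
  have hM : (β.comp ((α.comp β) ^ (p ^ (l - 1) - 1))).comp α
      = (β.comp α) ^ (p ^ (l - 1)) := by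
    rw [comp_pow_aux, LinearMap.comp_assoc, ← Module.End.mul_eq_comp, ← pow_succ, hk]
  -- N side: α ∘ (β ∘ (αβ)^k) = (αβ)^(k+1)
  have hN : α.comp (β.comp ((α.comp β) ^ (p ^ (l - 1) - 1)))
      = (α.comp β) ^ (p ^ (l - 1)) := by
    rw [← LinearMap.comp_assoc, ← Module.End.mul_eq_comp, ← pow_succ', hk]
  have hβα' : β.comp α = 1 + (p : Module.End R M) * u := by
    rw [hβα]; congr 1
  have hαβ' : α.comp β = 1 + (p : Module.End R N) * v := by
    rw [hαβ]; congr 1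
  obtain ⟨c, hc⟩ := key_pow (A := Module.End R M) p l hl u
  obtain ⟨d, hd⟩ := key_pow (A := Module.End R N) p l hl v
  refine ⟨c, d, ?_, ?_⟩
  · rw [hM, hβα', hc, nsmul_eq_mul, Nat.cast_pow]; rfl
  · rw [hN, hαβ', hd, nsmul_eq_mul, Nat.cast_pow]; rfl
end
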